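/- arXiv:0908.3835 — 2 statements merged into one kernel-verified Lean document; each statement's English description precedes it below -/
import Mathlib

section
/- Let n ≥ 1, let K be a number field, and let x = (x₀,…,x_n) ∈ K^{n+1} with x_i ≠ 0 for every i. Define y = (y₀,…,y_n) by y_i = ∏_{j ≠ i} x_j. Then (1/n)·h(x) ≤ h(y) ≤ n·h(x), where h denotes the logarithmic projective Weil height. -/
open NumberField IsDedekindDomain MvPolynomial
open scoped Classical

/-- The normalized `v`-adic absolute value attached to a finite place (nonzero prime ideal) of
the ring of integers of a number field `L`: `|t|_v = (Norm v)^(-ord_v t)`. -/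
noncomputable def finAbs {L : Type*} [Field L] [NumberField L]
    (v : HeightOneSpectrum (𝓞 L)) (t : L) : ℝ :=
  if ht : t = 0 then 0
  else (Ideal.absNorm v.asIdeal : ℝ) ^
    (Multiplicative.toAdd (WithZero.unzero ((Valuation.ne_zero_iff (v.valuation L)).mpr ht)) : ℤ)

/-- The absolute logarithmic projective Weil height of a (nonzero) tuple of elements of a
number field `L`:
`h(x) = (1/[L:ℚ]) * ( Σ_{v arch} d_v · log max_i |x_i|_v + Σ_{v finite} log max_i |x_i|_v )`.
It is invariant under scaling of the tuple and under finite extension of `L`, hence gives the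
standard Weil height on points of projective space over the algebraic numbers. -/
noncomputable def projHeight {L : Type*} [Field L] [NumberField L]
    {ι : Type*} [Fintype ι] [Nonempty ι] (x : ι → L) : ℝ :=
  (Module.finrank ℚ L : ℝ)⁻¹ *
    ((∑ v : InfinitePlace L, (v.mult : ℝ) * Real.log (⨆ i, v (x i))) +
      ∑ᶠ v : HeightOneSpectrum (𝓞 L), Real.log (⨆ i, finAbs v (x i)))

/-!
Writing `P = ∏ⱼ xⱼ`, the tuple `y` is `P • x⁻¹`, so `h(y) = h(x⁻¹)`. Each `yᵢ` is a product of
`n` coordinates of `x`, so `y` is a sub-tuple of the table of all `n`-fold products of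
coordinates of `x`, whose height is `n · h(x)`; hence `h(y) ≤ n · h(x)`. Applied to `x⁻¹`,
whose associated tuple is `P⁻¹ • x`, the same bound gives `h(x) ≤ n · h(x⁻¹) = n · h(y)`.
-/

lemma Fin.prod_erase_eq_prod_succAbove {M : Type*} [CommMonoid M] {n : ℕ} (x : Fin (n + 1) → M)
    (i : Fin (n + 1)) : ∏ j ∈ Finset.univ.erase i, x j = ∏ a : Fin n, x (i.succAbove a) := by
  rw [← Finset.compl_singleton, ← Fin.image_succAbove_univ,
    Finset.prod_image Fin.succAbove_right_injective.injOn]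

lemma prod_erase_eq_prod_smul_inv {F ι : Type*} [Field F] [Fintype ι] [DecidableEq ι]
    {x : ι → F} (hx : ∀ i, x i ≠ 0) :
    (fun i => ∏ j ∈ Finset.univ.erase i, x j) = (∏ j, x j) • x⁻¹ := by
  funext i
  rw [Pi.smul_apply, Pi.inv_apply, smul_eq_mul, ← Finset.mul_prod_erase _ x (Finset.mem_univ i),
    mul_comm (x i), mul_inv_cancel_right₀ (hx i)]

namespace Height

variable {K : Type*} [Field K] [AdmissibleAbsValues K] {n : ℕ}

lemma logHeight_prod_erase_le {x : Fin (n + 1) → K} (hx : x ≠ 0) :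
    logHeight (fun i => ∏ j ∈ Finset.univ.erase i, x j) ≤ n * logHeight x := by
  have hy : (fun i => ∏ j ∈ Finset.univ.erase i, x j) =
      (fun I : Fin n → Fin (n + 1) => ∏ a, x (I a)) ∘ Fin.succAbove := by
    funext i
    exact Fin.prod_erase_eq_prod_succAbove x i
  calc logHeight (fun i => ∏ j ∈ Finset.univ.erase i, x j)
      ≤ logHeight (fun I : Fin n → Fin (n + 1) => ∏ a, x (I a)) := hy ▸ logHeight_comp_le _ _
    _ = ∑ _a : Fin n, logHeight x := logHeight_fun_prod_eq (x := fun _ => x) fun _ => hx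
    _ = n * logHeight x := by simp

lemma logHeight_le_mul_logHeight_prod_erase {x : Fin (n + 1) → K} (hx : ∀ i, x i ≠ 0) :
    logHeight x ≤ n * logHeight (fun i => ∏ j ∈ Finset.univ.erase i, x j) := by
  have hP : ∏ j, x j ≠ 0 := Finset.prod_ne_zero_iff.mpr fun j _ => hx j
  have hxinv : ∀ i, x⁻¹ i ≠ 0 := fun i => inv_ne_zero (hx i)
  calc logHeight x
      = logHeight (fun i => ∏ j ∈ Finset.univ.erase i, x⁻¹ j) := by
        rw [prod_erase_eq_prod_smul_inv hxinv, inv_inv,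
          logHeight_smul_eq_logHeight _ (Finset.prod_ne_zero_iff.mpr fun j _ => hxinv j)]
    _ ≤ n * logHeight x⁻¹ := logHeight_prod_erase_le fun h => hxinv 0 (congrFun h 0)
    _ = n * logHeight (fun i => ∏ j ∈ Finset.univ.erase i, x j) := by
        rw [prod_erase_eq_prod_smul_inv hx, logHeight_smul_eq_logHeight _ hP]

end Height

lemma AbsoluteValue.iSup_apply_pos {K ι : Type*} [Field K] [Finite ι] (v : AbsoluteValue K ℝ)
    {x : ι → K} (hx : x ≠ 0) : 0 < ⨆ i, v (x i) := by
  obtain ⟨i, hi⟩ := Function.ne_iff.mp hx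
  exact (v.pos hi).trans_le (Finite.le_ciSup_of_le i le_rfl)

section NumberField

variable {L : Type*} [Field L] [NumberField L]

lemma finAbs_eq_finitePlace_mk (v : HeightOneSpectrum (𝓞 L)) (t : L) :
    finAbs v t = FinitePlace.mk v t := by
  rw [FinitePlace.mk_apply, FinitePlace.norm_embedding, HeightOneSpectrum.adicAbv_def, finAbs]
  split_ifs with ht
  · simp [ht]
  · rw [WithZeroMulInt.toNNReal_neg_apply _ ((Valuation.ne_zero_iff _).mpr ht)]
    push_cast
    rfl

lemma projHeight_eq_inv_finrank_mul_logHeight {ι : Type*} [Fintype ι] [Nonempty ι] {x : ι → L}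
    (hx : x ≠ 0) : projHeight x = (Module.finrank ℚ L : ℝ)⁻¹ * Height.logHeight x := by
  have hfin : ∑ᶠ v : HeightOneSpectrum (𝓞 L), Real.log (⨆ i, finAbs v (x i)) =
      ∑ᶠ w : FinitePlace L, Real.log (⨆ i, w (x i)) := by
    rw [← finsum_comp_equiv FinitePlace.equivHeightOneSpectrum]
    simp only [finAbs_eq_finitePlace_mk, FinitePlace.equivHeightOneSpectrum_apply,
      FinitePlace.mk_maximalIdeal]
  have hinf (w : InfinitePlace L) : (⨆ i, w (x i)) ^ w.mult ≠ 0 :=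
    pow_ne_zero _ (w.1.iSup_apply_pos hx).ne'
  have hfp (w : FinitePlace L) : 0 < ⨆ i, w (x i) := w.1.iSup_apply_pos hx
  rw [projHeight, hfin, Height.logHeight_eq_log_mulHeight, NumberField.mulHeight_eq hx,
    Real.log_mul (Finset.prod_ne_zero_iff.mpr fun w _ => hinf w)
      (finprod_ne_zero fun w => (hfp w).ne'),
    Real.log_prod fun w _ => hinf w, Real.log_finprod hfp]
  simp only [Real.log_pow]

end NumberField

theorem height_of_inverted_tuple_general (K : Type*) [Field K] [NumberField K] (n : ℕ)
    (x : Fin (n + 1) → K) (hx : ∀ i, x i ≠ 0) :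
    (1 / n : ℝ) * projHeight x ≤
        projHeight (fun i => ∏ j ∈ Finset.univ.erase i, x j) ∧
      projHeight (fun i => ∏ j ∈ Finset.univ.erase i, x j) ≤ n * projHeight x := by
  have hx₀ : x ≠ 0 := Function.ne_iff.mpr ⟨0, hx 0⟩
  have hy₀ : (fun i => ∏ j ∈ Finset.univ.erase i, x j) ≠ 0 :=
    Function.ne_iff.mpr ⟨0, Finset.prod_ne_zero_iff.mpr fun j _ => hx j⟩
  rw [projHeight_eq_inv_finrank_mul_logHeight hx₀, projHeight_eq_inv_finrank_mul_logHeight hy₀,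
    mul_left_comm, mul_left_comm (n : ℝ), one_div_mul_eq_div]
  constructor
  · gcongr
    exact div_le_of_le_mul₀ n.cast_nonneg (Height.logHeight_nonneg _)
      ((Height.logHeight_le_mul_logHeight_prod_erase hx).trans_eq (mul_comm _ _))
  · gcongr
    exact Height.logHeight_prod_erase_le hx₀

/-- **Proposition 4.3 of the paper (two-sided estimate).**  For a tuple `x ∈ K^{n+1}` with all
coordinates nonzero, the tuple `y` with `yᵢ = ∏_{j ≠ i} xⱼ` (representing the image of `[x]`
under `[X₀ : ⋯ : Xₙ] ↦ [X₀⁻¹ : ⋯ : Xₙ⁻¹]`) satisfies `(1/n)·h(x) ≤ h(y) ≤ n·h(x)`. -/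
theorem height_of_inverted_tuple (K : Type*) [Field K] [NumberField K] (n : ℕ) (hn : 1 ≤ n)
    (x : Fin (n + 1) → K) (hx : ∀ i, x i ≠ 0) :
    (1 / n : ℝ) * projHeight x ≤
        projHeight (fun i => ∏ j ∈ Finset.univ.erase i, x j) ∧
      projHeight (fun i => ∏ j ∈ Finset.univ.erase i, x j) ≤ n * projHeight x :=
  height_of_inverted_tuple_general K n x hx
end

section
/- For all integers n ≥ 2 and d ≥ 2 the following holds: there exists a dominant rational self-map φ = [φ₀ : ⋯ : φ_n] : ℙⁿ ⇢ ℙⁿ of degree d defined over ℚ (given by coprime homogeneous polynomials φ₀,…,φ_n ∈ ℚ[X₀,…,X_n] of degree d that are algebraically independent over ℚ) such that for every number field K, every nonzero homogeneous polynomial g ∈ K[X₀,…,X_n], every ε > 0, and every B > 0, there is a finite extension L/K and a nonzero x ∈ L^{n+1} with g(x) ≠ 0, (φ₀(x),…,φ_n(x)) ≠ 0, h(x) > B, and h(φ₀(x),…,φ_n(x)) ≤ (d^{−(n−1)} + ε)·h(x). In other words, the height expansion coefficient satisfies μ(φ) ≤ d^{−(n−1)}, and hence μ̄_d(ℙⁿ)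 ≤ 1/d^{n−1}. -/
open NumberField IsDedekindDomain MvPolynomial
open scoped Classical

/-!
In the affine chart `X₀ = 1` the map `φ = [X₀^d : X₀^(d-1) X₁ + X₀^d : … : X₀^(d-1) Xₙ + Xₙ₋₁^d]`
is the triangular automorphism `y ↦ (y₁ + 1, y₂ + y₁^d, …, yₙ + yₙ₋₁^d)` of `𝔸ⁿ`, with inverse
`yᵢ₊₁ = cᵢ - yᵢ^d` (`y₀ = 1`). For an integer vector `c` with `c₀ = t` large and the other `cᵢ`
bounded, the point `x = (1, y)` has `φ(x) = (1, c)` of height `log t`, while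
`|yₙ| ≥ (t/2)^(d^(n-1))`, so `h(x) ≥ d^(n-1) log (t/2)`. Composing `g` with the inverse gives a
nonzero polynomial in `c`, so the combinatorial Nullstellensatz produces such `c` with
`g(x) ≠ 0`, the bound on the `cᵢ` with `i ≠ 0` depending on `g` only. The map is dominant since
`X₀^d = φ₀` and `X₀^(d-1) Xᵢ₊₁ = φᵢ₊₁ - Xᵢ^d` make every `Xᵢ` algebraic over `ℚ[φ]`.
-/

namespace MvPolynomial

section Triangular

variable {R S : Type*} [CommRing R] [CommRing S]

noncomputable def triangularMap (R : Type*) [CommRing R] (n d : ℕ) :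
    Fin (n + 1) → MvPolynomial (Fin (n + 1)) R :=
  Fin.cons (X 0 ^ d) fun i => X 0 ^ (d - 1) * X i.succ + X i.castSucc ^ d

def triangularInv (d : ℕ) {n : ℕ} (c : Fin n → R) : Fin (n + 1) → R :=
  Fin.induction 1 fun i y => c i - y ^ d

@[simp] lemma triangularMap_zero (n d : ℕ) : triangularMap R n d 0 = X 0 ^ d := rfl

@[simp] lemma triangularMap_succ {n : ℕ} (d : ℕ) (i : Fin n) :
    triangularMap R n d i.succ = X 0 ^ (d - 1) * X i.succ + X i.castSucc ^ d := rfl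

@[simp] lemma triangularInv_zero (d : ℕ) {n : ℕ} (c : Fin n → R) : triangularInv d c 0 = 1 := rfl

@[simp] lemma triangularInv_succ (d : ℕ) {n : ℕ} (c : Fin n → R) (i : Fin n) :
    triangularInv d c i.succ = c i - triangularInv d c i.castSucc ^ d :=
  Fin.induction_succ _ _ i

lemma map_triangularInv (f : R →+* S) (d : ℕ) {n : ℕ} (c : Fin n → R) (i : Fin (n + 1)) :
    f (triangularInv d c i) = triangularInv d (f ∘ c) i := by
  induction i using Fin.induction with
  | zero => simp
  | succ i ih => simp [ih]

lemma intCast_triangularInv (d : ℕ) {n : ℕ} (c : Fin n → ℤ) (i : Fin (n + 1)) :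
    ((triangularInv d c i : ℤ) : R) = triangularInv d (fun j => (c j : R)) i :=
  map_triangularInv (Int.castRingHom R) d c i

lemma triangularInv_eq_self (d : ℕ) {n : ℕ} {y : Fin (n + 1) → R} (hy : y 0 = 1) :
    triangularInv d (fun i => y i.succ + y i.castSucc ^ d) = y := by
  funext i
  induction i using Fin.induction with
  | zero => simp [hy]
  | succ i ih => simp [ih]

lemma aeval_triangularMap_triangularInv [Algebra R S] {n : ℕ} (d : ℕ) (c : Fin n → S)
    (i : Fin (n + 1)) :
    aeval (triangularInv d c) (triangularMap R n d i) = (Fin.cons 1 c : Fin (n + 1) → S) i := by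
  cases i using Fin.cases with
  | zero => simp
  | succ i => simp

lemma eval_aeval_triangularInv_X {n : ℕ} (d : ℕ) (c : Fin n → R)
    (g : MvPolynomial (Fin (n + 1)) R) :
    eval c (aeval (triangularInv d (X : Fin n → MvPolynomial (Fin n) R)) g) =
      eval (triangularInv d c) g := by
  have hC : (eval c).comp C = RingHom.id R := RingHom.ext (eval_C (f := c))
  rw [aeval_eq_bind₁, hom_bind₁, hC]
  change eval _ g = _
  congr 2
  funext i
  simp [map_triangularInv, Function.comp_def]

lemma isHomogeneous_triangularMap {n d : ℕ} (hd : 1 ≤ d) (i : Fin (n + 1)) :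
    (triangularMap R n d i).IsHomogeneous d := by
  cases i using Fin.cases with
  | zero => exact isHomogeneous_X_pow _ _
  | succ i =>
    refine IsHomogeneous.add ?_ (isHomogeneous_X_pow _ _)
    simpa [Nat.sub_add_cancel hd] using
      (isHomogeneous_X_pow (R := R) 0 (d - 1)).mul (isHomogeneous_X R i.succ)

end Triangular

section Domain

variable {R : Type*} [CommRing R] [IsDomain R]

lemma X_zero_not_dvd_triangularMap_succ {n : ℕ} (d : ℕ) {i : Fin n} (hi : i.castSucc ≠ 0) :
    ¬ X 0 ∣ triangularMap R n d i.succ := by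
  intro h
  -- at the unit vector `e_{i.castSucc}`, `X 0` vanishes while `triangularMap` at `i.succ` is `1`
  have := map_dvd (eval (Pi.single i.castSucc 1)) h
  simp [hi.symm, Pi.single_eq_of_ne (Fin.castSucc_lt_succ (i := i)).ne'] at this

lemma isUnit_of_forall_dvd_triangularMap {n : ℕ} (hn : 2 ≤ n) (d : ℕ)
    {p : MvPolynomial (Fin (n + 1)) R} (hp : ∀ i, p ∣ triangularMap R n d i) : IsUnit p := by
  obtain ⟨k, -, hk⟩ := (dvd_prime_pow (X_prime (i := (0 : Fin (n + 1)))) d).mp (hp 0)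
  rcases k with _ | k
  · simpa using hk
  · have one : (⟨1, by omega⟩ : Fin n).castSucc ≠ 0 := by simp [Fin.ext_iff]
    refine absurd ?_ (X_zero_not_dvd_triangularMap_succ (R := R) d one)
    exact (dvd_pow_self _ k.succ_ne_zero).trans (hk.symm.dvd.trans (hp _))

lemma isAlgebraic_X_adjoin_range_triangularMap {n d : ℕ} (hd : 1 ≤ d) (i : Fin (n + 1)) :
    IsAlgebraic (Algebra.adjoin R (Set.range (triangularMap R n d)))
      (X i : MvPolynomial (Fin (n + 1)) R) := by
  set A := Algebra.adjoin R (Set.range (triangularMap R n d))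
  have hφ (j : Fin (n + 1)) : IsAlgebraic A (triangularMap R n d j) :=
    isAlgebraic_algebraMap (⟨_, Algebra.subset_adjoin (Set.mem_range_self j)⟩ : A)
  have h0 : IsAlgebraic A (X 0 : MvPolynomial (Fin (n + 1)) R) := (hφ 0).of_pow hd
  induction i using Fin.induction with
  | zero => exact h0
  | succ i ih =>
    have hsplit : X 0 ^ (d - 1) * X i.succ = triangularMap R n d i.succ - X i.castSucc ^ d := by
      simp
    refine .of_mul (mem_nonZeroDivisors_of_ne_zero (pow_ne_zero (d - 1) (X_ne_zero 0)))
      (h0.pow _) ?_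
    rw [hsplit]
    exact (hφ _).sub (ih.pow d)

lemma algebraicIndependent_triangularMap {n d : ℕ} (hd : 1 ≤ d) :
    AlgebraicIndependent R (triangularMap R n d) := by
  have : Algebra.IsAlgebraic (Algebra.adjoin R (Set.range (triangularMap R n d)))
      (MvPolynomial (Fin (n + 1)) R) := ⟨fun p => by
    induction p using MvPolynomial.induction_on with
    | C a => exact isAlgebraic_algebraMap (algebraMap R _ a)
    | add p q hp hq => exact hp.add hq
    | mul_X p i hp => exact hp.mul (isAlgebraic_X_adjoin_range_triangularMap hd i)⟩
  refine (Algebra.IsAlgebraic.isTranscendenceBasis_of_lift_le_trdeg_of_finite R _ ?_).1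
  simp [MvPolynomial.trdeg_of_isDomain]

lemma exists_eval_natCast_ne_zero [CharZero R] {σ : Type*} [Finite σ] {P : MvPolynomial σ R}
    (hP : P ≠ 0) (i₀ : σ) (T : ℕ) :
    ∃ c : σ → ℕ, T ≤ c i₀ ∧ (∀ i ≠ i₀, c i ≤ P.totalDegree) ∧ eval (fun i => (c i : R)) P ≠ 0 := by
  set N := P.totalDegree
  let s : σ → Finset ℕ := fun i => if i = i₀ then Finset.Icc T (T + N) else Finset.range (N + 1)
  have hs (i : σ) : (s i).card = N + 1 := by
    by_cases h : i = i₀ <;> simp [s, h]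
    omega
  obtain ⟨x, hx, hPx⟩ : ∃ x : σ → R, (∀ i, x i ∈ (s i).map Nat.castEmbedding) ∧ eval x P ≠ 0 := by
    by_contra! h
    refine hP (eq_zero_of_eval_zero_at_prod_finset P _ (fun i => ?_) h)
    simpa [hs] using Nat.lt_succ_of_le (degreeOf_le_totalDegree P i)
  choose c hc hcx using fun i => Finset.mem_map.mp (hx i)
  refine ⟨c, ?_, fun i hi => ?_, ?_⟩
  · have := hc i₀
    simp only [s, if_pos, Finset.mem_Icc] at this
    exact this.1
  · have := hc i
    simp only [s, if_neg hi, Finset.mem_range] at this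
    omega
  · convert hPx
    exact hcx _

end Domain

lemma IsHomogeneous.eval_smul {σ R : Type*} [CommSemiring R] {φ : MvPolynomial σ R} {e : ℕ}
    (hφ : φ.IsHomogeneous e) (c : R) (w : σ → R) : eval (c • w) φ = c ^ e * eval w φ := by
  rw [eval_eq, eval_eq, Finset.mul_sum]
  refine Finset.sum_congr rfl fun s hs => ?_
  simp_rw [Pi.smul_apply, smul_eq_mul, mul_pow, Finset.prod_mul_distrib,
    Finset.prod_pow_eq_pow_sum, ← hφ.degree_eq_sum_deg_support hs]
  ring

section Field

variable {K : Type*} [Field K]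

lemma IsHomogeneous.exists_eval_ne_zero_of_apply_eq_one [Infinite K] {σ : Type*}
    {φ : MvPolynomial σ K} {e : ℕ} (hφ : φ.IsHomogeneous e) (h0 : φ ≠ 0) (i : σ) :
    ∃ z : σ → K, z i = 1 ∧ eval z φ ≠ 0 := by
  obtain ⟨w, hw⟩ : ∃ w, eval w (X i * φ) ≠ 0 := by
    by_contra! h
    exact mul_ne_zero (X_ne_zero i) h0 (MvPolynomial.funext fun w => by simpa using h w)
  rw [map_mul, eval_X] at hw
  have hwi := left_ne_zero_of_mul hw
  refine ⟨(w i)⁻¹ • w, by simp [hwi], ?_⟩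
  rw [hφ.eval_smul]
  exact mul_ne_zero (pow_ne_zero _ (inv_ne_zero hwi)) (right_ne_zero_of_mul hw)

lemma aeval_triangularInv_X_ne_zero [Infinite K] {n e : ℕ} (d : ℕ)
    {g : MvPolynomial (Fin (n + 1)) K} (hg : g ≠ 0) (hge : g.IsHomogeneous e) :
    aeval (triangularInv d (X : Fin n → MvPolynomial (Fin n) K)) g ≠ 0 := by
  obtain ⟨z, hz0, hz⟩ := hge.exists_eval_ne_zero_of_apply_eq_one hg 0
  intro h
  have := congrArg (eval fun i => z i.succ + z i.castSucc ^ d) h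
  rw [eval_aeval_triangularInv_X, triangularInv_eq_self d hz0, map_zero] at this
  exact hz this

lemma exists_eval_triangularInv_natCast_ne_zero [CharZero K] {n e : ℕ} (d : ℕ)
    {g : MvPolynomial (Fin (n + 1)) K} (hg : g ≠ 0) (hge : g.IsHomogeneous e) (i₀ : Fin n) :
    ∃ U : ℕ, ∀ T : ℝ, ∃ c : Fin n → ℕ, T ≤ c i₀ ∧ (∀ i ≠ i₀, c i ≤ U) ∧
      eval (triangularInv d fun i => (c i : K)) g ≠ 0 := by
  refine ⟨(aeval (triangularInv d (X : Fin n → MvPolynomial (Fin n) K)) g).totalDegree,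
    fun T => ?_⟩
  obtain ⟨c, hT, hU, hc⟩ :=
    exists_eval_natCast_ne_zero (aeval_triangularInv_X_ne_zero d hg hge) i₀ ⌈T⌉₊
  exact ⟨c, Nat.ceil_le.mp hT, hU, by rwa [eval_aeval_triangularInv_X] at hc⟩

end Field

lemma add_le_abs_sub_pow {a c A U : ℝ} {d : ℕ} (hd : 2 ≤ d) (hA : 0 ≤ A) (hU : 2 ≤ U)
    (ha : A + U ≤ |a|) (hc : |c| ≤ U) : A ^ d + U ≤ |c - a ^ d| := by
  have hUd : 2 * U ≤ U ^ d :=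
    calc 2 * U ≤ U ^ 2 := by nlinarith
      _ ≤ U ^ d := pow_le_pow_right₀ (by linarith) hd
  calc A ^ d + U ≤ (A + U) ^ d - U := by
        linarith [pow_add_pow_le hA (by linarith : 0 ≤ U) (by omega : d ≠ 0)]
    _ ≤ |a| ^ d - |c| := by gcongr
    _ ≤ |c - a ^ d| := by
        rw [← abs_pow, abs_sub_comm]
        exact abs_sub_abs_le_abs_sub _ _

lemma add_le_abs_triangularInv_succ {m d : ℕ} (hd : 2 ≤ d) {c : Fin (m + 1) → ℝ} {U : ℝ}
    (hU : 2 ≤ U) (hc0 : 2 * U + 2 ≤ c 0) (hc : ∀ i ≠ 0, |c i| ≤ U) (i : Fin (m + 1)) :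
    (c 0 / 2) ^ d ^ (i : ℕ) + U ≤ |triangularInv d c i.succ| := by
  induction i using Fin.induction with
  | zero =>
    rw [triangularInv_succ, Fin.castSucc_zero, triangularInv_zero, one_pow,
      abs_of_nonneg (by linarith)]
    simp only [Fin.val_zero, pow_zero, pow_one]
    linarith
  | succ i ih =>
    rw [triangularInv_succ, ← Fin.succ_castSucc, Fin.val_succ, pow_succ, pow_mul]
    exact add_le_abs_sub_pow hd (pow_nonneg (by linarith) _) hU ih (hc _ (Fin.succ_ne_zero i))

end MvPolynomial

lemma log_two_mul_le {D s H ε : ℝ} (hD : 1 ≤ D) (hs : 1 ≤ s) (hH : D * Real.log s ≤ H)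
    (h2 : Real.log 2 ≤ ε * Real.log s) (hε : 0 ≤ ε) :
    Real.log (2 * s) ≤ (D⁻¹ + ε) * H := by
  have hlog : 0 ≤ Real.log s := Real.log_nonneg hs
  have hsH : Real.log s ≤ H := by nlinarith
  have hsHD : Real.log s ≤ H / D := by rw [le_div_iff₀ (by positivity)]; linarith
  rw [Real.log_mul two_ne_zero (by linarith), add_mul, inv_mul_eq_div]
  linarith [mul_le_mul_of_nonneg_left hsH hε]

section Height

variable {L : Type*} [Field L] [NumberField L]

lemma finAbs_of_ne_zero (v : HeightOneSpectrum (𝓞 L)) {t : L} (ht : t ≠ 0) :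
    finAbs v t = (Ideal.absNorm v.asIdeal : ℝ) ^ WithZero.log (v.valuation L t) := by
  rw [finAbs, dif_neg ht, WithZero.toAdd_unzero_eq_log]

lemma finAbs_one (v : HeightOneSpectrum (𝓞 L)) : finAbs v (1 : L) = 1 := by
  simp [finAbs_of_ne_zero]

lemma finAbs_algebraMap_le_one (v : HeightOneSpectrum (𝓞 L)) (a : 𝓞 L) :
    finAbs v (algebraMap (𝓞 L) L a) ≤ 1 := by
  by_cases ha : algebraMap (𝓞 L) L a = 0
  · simp [finAbs, ha]
  have h1 : (1 : ℝ) ≤ Ideal.absNorm v.asIdeal :=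
    Nat.one_le_cast.mpr (Nat.one_le_iff_ne_zero.mpr (Ideal.absNorm_eq_zero_iff.not.mpr v.ne_bot))
  rw [finAbs_of_ne_zero v ha]
  refine zpow_le_one_of_nonpos₀ h1 ?_
  rw [WithZero.log_le_iff_le_exp ((Valuation.ne_zero_iff _).mpr ha)]
  exact v.valuation_le_one a

lemma projHeight_intCast_of_eq_one {ι : Type*} [Fintype ι] [Nonempty ι] (ξ : ι → ℤ) {j : ι}
    (hj : ξ j = 1) : projHeight (fun i => (ξ i : L)) = Real.log (⨆ i, |(ξ i : ℝ)|) := by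
  have hfin (v : HeightOneSpectrum (𝓞 L)) : ⨆ i, finAbs v (ξ i : L) = 1 := by
    refine le_antisymm (ciSup_le fun i => ?_) ?_
    · simpa using finAbs_algebraMap_le_one v (ξ i)
    · simpa [hj, finAbs_one] using
        le_ciSup (Set.finite_range fun i => finAbs v (ξ i : L)).bddAbove j
  have harch (w : InfinitePlace L) : ⨆ i, w (ξ i : L) = ⨆ i, |(ξ i : ℝ)| := by
    simp [InfinitePlace.map_intCast, Int.norm_eq_abs]
  have hdeg : (∑ w : InfinitePlace L, (w.mult : ℝ)) = Module.finrank ℚ L := by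
    exact_mod_cast InfinitePlace.sum_mult_eq
  have hL : (Module.finrank ℚ L : ℝ) ≠ 0 := Nat.cast_ne_zero.mpr Module.finrank_pos.ne'
  simp only [projHeight, hfin, harch, Real.log_one, finsum_zero, add_zero, ← Finset.sum_mul, hdeg]
  field_simp

lemma projHeight_cons_one_natCast {n : ℕ} {c : Fin n → ℕ} {i₀ : Fin n} (hc : ∀ i, c i ≤ c i₀)
    (h1 : 1 ≤ c i₀) :
    projHeight (Fin.cons 1 fun i => (c i : L) : Fin (n + 1) → L) = Real.log (c i₀) := by
  have hξ : (Fin.cons 1 fun i => (c i : L) : Fin (n + 1) → L) =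
      fun i => (((Fin.cons 1 fun i => (c i : ℤ)) : Fin (n + 1) → ℤ) i : L) := by
    funext i
    cases i using Fin.cases <;> simp
  rw [hξ, projHeight_intCast_of_eq_one _ (j := 0) rfl]
  congr 1
  refine le_antisymm (ciSup_le fun i => ?_) ?_
  · cases i using Fin.cases <;> simp [hc, h1]
  · simpa using le_ciSup (Set.finite_range fun i =>
      |((((Fin.cons 1 fun i => (c i : ℤ)) : Fin (n + 1) → ℤ) i : ℤ) : ℝ)|).bddAbove i₀.succ

lemma mul_log_le_projHeight_triangularInv_natCast {m d U : ℕ} (hd : 2 ≤ d)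
    {c : Fin (m + 1) → ℕ} (hcU : ∀ i ≠ 0, c i ≤ U) (hc0 : 2 * U + 6 ≤ c 0) :
    (d ^ m : ℝ) * Real.log (c 0 / 2) ≤ projHeight (triangularInv d fun i => (c i : L)) := by
  set Y := triangularInv d fun i => (c i : ℤ)
  have hY : (triangularInv d fun i => (c i : L)) = fun i => (Y i : L) := by
    funext i
    simp [Y, intCast_triangularInv]
  have hc0' : (2 * U + 6 : ℝ) ≤ c 0 := by exact_mod_cast hc0
  have hgrow := add_le_abs_triangularInv_succ hd (U := U + 2) (c := fun i => (c i : ℝ))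
    (by linarith [U.cast_nonneg (α := ℝ)]) (by linarith) (fun i hi => by
      rw [abs_of_nonneg (Nat.cast_nonneg _)]
      linarith [(by exact_mod_cast hcU i hi : (c i : ℝ) ≤ U)]) (Fin.last m)
  have hpos : (0 : ℝ) < (c 0 / 2) ^ d ^ m := pow_pos (by linarith [U.cast_nonneg (α := ℝ)]) _
  have hlast : (c 0 / 2 : ℝ) ^ d ^ m ≤ |(Y (Fin.last m).succ : ℝ)| := by
    simp only [Y, intCast_triangularInv, Int.cast_natCast, Fin.val_last] at hgrow ⊢
    linarith
  rw [hY, projHeight_intCast_of_eq_one Y (j := 0) (triangularInv_zero _ _)]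
  calc (d ^ m : ℝ) * Real.log (c 0 / 2) = Real.log ((c 0 / 2) ^ d ^ m) := by
        rw [Real.log_pow]; push_cast; ring
    _ ≤ Real.log |(Y (Fin.last m).succ : ℝ)| := Real.log_le_log hpos hlast
    _ ≤ Real.log (⨆ i, |(Y i : ℝ)|) := Real.log_le_log (hpos.trans_le hlast)
        (le_ciSup (Set.finite_range fun i => |(Y i : ℝ)|).bddAbove _)

lemma projHeight_cons_one_natCast_le {m d U : ℕ} (hd : 2 ≤ d) {c : Fin (m + 1) → ℕ}
    (hcU : ∀ i ≠ 0, c i ≤ U) (hc0 : 2 * U + 6 ≤ c 0) {ε : ℝ} (hε : 0 ≤ ε)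
    (h2 : Real.log 2 ≤ ε * Real.log (c 0 / 2)) :
    projHeight (Fin.cons 1 fun i => (c i : L) : Fin (m + 2) → L) ≤
      (((d : ℝ) ^ m)⁻¹ + ε) * projHeight (triangularInv d fun i => (c i : L)) := by
  have hc (i : Fin (m + 1)) : c i ≤ c 0 := by
    rcases eq_or_ne i 0 with rfl | hi
    exacts [le_rfl, (hcU i hi).trans (by omega)]
  rw [projHeight_cons_one_natCast hc (by omega), show (c 0 : ℝ) = 2 * (c 0 / 2) by ring]
  refine log_two_mul_le (one_le_pow₀ (by norm_cast; omega)) ?_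
    (mul_log_le_projHeight_triangularInv_natCast hd hcU hc0) h2 hε
  rw [le_div_iff₀ two_pos]
  exact_mod_cast (by omega : 1 * 2 ≤ c 0)

end Height

/-- **The bound `μ̄_d(ℙⁿ) ≤ d^{-(n-1)}` from Section 4 of the paper.**  For all `n ≥ 2`,
`d ≥ 2` there is a dominant degree-`d` rational self-map `φ` of `ℙⁿ` over `ℚ` (given by
coprime, algebraically independent degree-`d` forms) whose height expansion coefficient is at
most `d^{-(n-1)}`: in every nonempty Zariski open set there are points of arbitrarily large
height with `h(φ(x)) ≤ (d^{-(n-1)} + ε)·h(x)`. -/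
theorem mu_bar_Pn_le_inv_pow (n d : ℕ) (hn : 2 ≤ n) (hd : 2 ≤ d) :
    ∃ φ : Fin (n + 1) → MvPolynomial (Fin (n + 1)) ℚ,
      (∀ i, (φ i).IsHomogeneous d) ∧
      (∀ p : MvPolynomial (Fin (n + 1)) ℚ, (∀ i, p ∣ φ i) → IsUnit p) ∧
      AlgebraicIndependent ℚ φ ∧
      ∀ (K : Type) [Field K] [NumberField K]
        (g : MvPolynomial (Fin (n + 1)) K) (eg : ℕ), g ≠ 0 → g.IsHomogeneous eg →
        ∀ ε B : ℝ, 0 < ε → 0 < B →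
        ∃ (L : Type) (_ : Field L) (_ : NumberField L) (_ : Algebra K L)
          (x : Fin (n + 1) → L),
          x ≠ 0 ∧ (aeval x) g ≠ 0 ∧ (fun i => (aeval x) (φ i)) ≠ 0 ∧
          projHeight x > B ∧
          projHeight (fun i => (aeval x) (φ i)) ≤
            (((d : ℝ) ^ (n - 1))⁻¹ + ε) * projHeight x := by
  refine ⟨triangularMap ℚ n d, isHomogeneous_triangularMap (by omega),
    fun p => isUnit_of_forall_dvd_triangularMap hn d, algebraicIndependent_triangularMap (by omega),
    fun K _ _ g e hg hge ε B hε hB => ?_⟩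
  obtain ⟨m, rfl⟩ : ∃ m, n = m + 1 := ⟨n - 1, by omega⟩
  obtain ⟨U, hU⟩ := exists_eval_triangularInv_natCast_ne_zero d hg hge 0
  obtain ⟨c, hcT, hcU, hgc⟩ := hU (2 * (Real.exp B + Real.exp (Real.log 2 / ε) + U + 3))
  have hexpB := Real.exp_pos B
  have hexp2 := Real.exp_pos (Real.log 2 / ε)
  have hU0 := U.cast_nonneg (α := ℝ)
  have hc0 : 2 * U + 6 ≤ c 0 := by exact_mod_cast (by linarith : (2 * U + 6 : ℝ) ≤ c 0)
  have hB' : B < Real.log (c 0 / 2) := (Real.lt_log_iff_exp_lt (by linarith)).mpr (by linarith)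
  have h2 : Real.log 2 ≤ ε * Real.log (c 0 / 2) := by
    rw [← div_le_iff₀' hε, Real.le_log_iff_exp_le (by linarith)]
    linarith
  have hφx : (fun i => aeval (triangularInv d fun i => (c i : K)) (triangularMap ℚ (m + 1) d i)) =
      Fin.cons 1 fun i => (c i : K) := funext (aeval_triangularMap_triangularInv d _)
  refine ⟨K, inferInstance, inferInstance, inferInstance, triangularInv d fun i => (c i : K),
    fun h => by simpa using congrFun h 0, by simpa [aeval_def] using hgc, ?_, ?_, ?_⟩
  · rw [hφx]
    exact fun h => by simpa using congrFun h 0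
  · nlinarith [mul_log_le_projHeight_triangularInv_natCast (L := K) hd hcU hc0,
      one_le_pow₀ (M₀ := ℝ) (n := m) (by norm_cast; omega : (1 : ℝ) ≤ d)]
  · rw [hφx, Nat.add_sub_cancel]
    exact projHeight_cons_one_natCast_le hd hcU hc0 hε.le h2
end
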